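/- (Counter doubling plus one.) Let (V, s₀, s₁) be a switch graph with distinct vertices C, A, B such that s₀(A) = s₁(A) = C. Suppose the train run from C visits A exactly T times before first reaching B, and that at the first step N at which the train's position is B, every switch except possibly the one at A is 0. Form a new switch graph V' = V ∪ {F} with F a fresh vertex, redefining s₀(B) = A and s₁(B) = F, setting s₀(F) = s₁(F) = F, and leaving all other edges unchanged. Then in V' the train run from C visits A exactly 2T + 1 times before first reaching F, and at the first step at which its position is F, every switch except possibly the one at A is 0. -/

import Mathlib

open scoped Classical

variable {V : Type*}

/-- One step of the train: move along the edge given by the current switch state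
and toggle the switch at the current vertex. -/
def step [DecidableEq V] (s0 s1 : V → V) (c : V × (V → Bool)) : V × (V → Bool) :=
  (if c.2 c.1 then s1 c.1 else s0 c.1, Function.update c.2 c.1 (!c.2 c.1))

/-- The train run from `u`: iterate the step map starting with all switches `0`. -/
def run [DecidableEq V] (s0 s1 : V → V) (u : V) (k : ℕ) : V × (V → Bool) :=
  (step s0 s1)^[k] (u, fun _ => false)

/-- The train run from `u` visits `A` exactly `T` times before first reaching `B`. -/
def VisitsExactly [DecidableEq V] (s0 s1 : V → V) (u A B : V) (T : ℕ) : Prop :=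
  ∃ N, (run s0 s1 u N).1 = B ∧ (∀ k < N, (run s0 s1 u k).1 ≠ B) ∧
    ((Finset.range N).filter (fun k => (run s0 s1 u k).1 = A)).card = T

/-- Extend a switch graph by a fresh vertex `none` (the new absorbing vertex `F`),
redirecting the given out-edge of `B` to `tgt` and keeping all other edges. -/
def extendTo [DecidableEq V] (f : V → V) (B : V) (tgt : Option V) :
    Option V → Option V :=
  fun x => match x with
  | none => none
  | some v => if v = B then tgt else some (f v)

/-- auxiliary: state on the extended graph, offset by `δ`. -/
def lift (δ σ : V → Bool) : Option V → Bool :=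
  fun x => x.elim false (fun w => xor (δ w) (σ w))

lemma lift_some (δ σ : V → Bool) (p : V) : lift δ σ (some p) = xor (δ p) (σ p) := rfl

lemma lift_none (δ σ : V → Bool) : lift δ σ none = false := rfl

lemma lift_update [DecidableEq V] (δ σ : V → Bool) (p : V) :
    Function.update (lift δ σ) (some p) (!(lift δ σ (some p)))
      = lift δ (Function.update σ p (!σ p)) := by
  funext x
  cases x with
  | none => simp [lift, Function.update]
  | some w =>
    rcases eq_or_ne w p with rfl | h
    · simp only [Function.update_self, lift_some]
      cases δ w <;> cases σ w <;> rfl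
    · simp [lift, Function.update, h, Option.some.injEq]

lemma sim [DecidableEq V] (s0 s1 : V → V) (A B : V) (hA : s1 A = s0 A)
    (δ : V → Bool) (hδ : ∀ w, w ≠ A → w ≠ B → δ w = false)
    (u : V) (σ : V → Bool) (k : ℕ)
    (hB : ∀ j < k, ((step s0 s1)^[j] (u, σ)).1 ≠ B) :
    (step (extendTo s0 B (some A)) (extendTo s1 B none))^[k] (some u, lift δ σ)
      = (some ((step s0 s1)^[k] (u, σ)).1, lift δ ((step s0 s1)^[k] (u, σ)).2) := by
  induction k with
  | zero => rfl
  | succ k ih =>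
    rw [Function.iterate_succ_apply', Function.iterate_succ_apply',
      ih (fun j hj => hB j (hj.trans (Nat.lt_succ_self k)))]
    have hpB : ((step s0 s1)^[k] (u, σ)).1 ≠ B := hB k (Nat.lt_succ_self k)
    set c := (step s0 s1)^[k] (u, σ) with hc
    obtain ⟨p, τ⟩ := c
    simp only at hpB ⊢
    unfold step
    refine Prod.ext ?_ (lift_update δ τ p)
    simp only [lift_some]
    have h0 : extendTo s0 B (some A) (some p) = some (s0 p) := by simp [extendTo, hpB]
    have h1 : extendTo s1 B none (some p) = some (s1 p) := by simp [extendTo, hpB]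
    rw [h0, h1]
    rcases eq_or_ne p A with rfl | hpA
    · simp only [hA, ite_self]
    · simp only [hδ p hpA hpB, Bool.false_xor]
      split <;> simp_all

/-- the state offset used in the second phase. -/
def delta' [DecidableEq V] (s0 s1 : V → V) (C A B : V) (N : ℕ) : V → Bool :=
  fun w => if w = A then !((run s0 s1 C N).2 A) else if w = B then true else false

lemma delta'_ne [DecidableEq V] (s0 s1 : V → V) (C A B : V) (N : ℕ)
    {w : V} (h1 : w ≠ A) (h2 : w ≠ B) : delta' s0 s1 C A B N w = false := by
  simp [delta', h1, h2]

lemma delta'_B [DecidableEq V] (s0 s1 : V → V) (C A B : V) (N : ℕ) (h : B ≠ A) :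
    delta' s0 s1 C A B N B = true := by
  simp [delta', h]

lemma delta'_A [DecidableEq V] (s0 s1 : V → V) (C A B : V) (N : ℕ) :
    delta' s0 s1 C A B N A = !((run s0 s1 C N).2 A) := by
  simp [delta']

/-- Counter doubling: if the train from `C` visits `A` exactly `T` times before first
reaching `B`, and at that point all switches except possibly `A`'s are `0`, then after
redirecting `s₀(B) = A`, `s₁(B) = F` for a fresh absorbing vertex `F`, the train from `C`
visits `A` exactly `2T + 1` times before first reaching `F`, and again all switches except
possibly `A`'s are `0` at that point. -/
theorem counter_doubling_plus_one [DecidableEq V] (s0 s1 : V → V) (C A B : V)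
    (hCA : C ≠ A) (hCB : C ≠ B) (hAB : A ≠ B)
    (hA0 : s0 A = C) (hA1 : s1 A = C) (T : ℕ)
    (hvis : VisitsExactly s0 s1 C A B T)
    (hclean : ∀ N, (run s0 s1 C N).1 = B → (∀ k < N, (run s0 s1 C k).1 ≠ B) →
      ∀ w, w ≠ A → (run s0 s1 C N).2 w = false) :
    VisitsExactly (extendTo s0 B (some A)) (extendTo s1 B none)
      (some C) (some A) none (2 * T + 1) ∧
    ∀ N, (run (extendTo s0 B (some A)) (extendTo s1 B none) (some C) N).1 = none →
      (∀ k < N,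
        (run (extendTo s0 B (some A)) (extendTo s1 B none) (some C) k).1 ≠ none) →
      ∀ w, w ≠ some A →
        (run (extendTo s0 B (some A)) (extendTo s1 B none) (some C) N).2 w = false := by
  obtain ⟨N, hNB, hfirst, hcount⟩ := hvis
  set s0' := extendTo s0 B (some A) with hs0'
  set s1' := extendTo s1 B none with hs1'
  have hA : s1 A = s0 A := hA1.trans hA0.symm
  have hclean' : ∀ w, w ≠ A → (run s0 s1 C N).2 w = false := hclean N hNB hfirst
  have hσB : (run s0 s1 C N).2 B = false := hclean' B (Ne.symm hAB)
  have hl0 : lift (fun _ : V => false) (fun _ : V => false) = (fun _ : Option V => false) := by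
    funext x; cases x <;> rfl
  set δ' := delta' s0 s1 C A B N with hδ'def
  have hδ' : ∀ w, w ≠ A → w ≠ B → δ' w = false := fun w h1 h2 => delta'_ne s0 s1 C A B N h1 h2
  -- phase 1
  have phase1 : ∀ k ≤ N, run s0' s1' (some C) k
      = (some ((run s0 s1 C k).1), lift (fun _ => false) ((run s0 s1 C k).2)) := by
    intro k hk
    have hs := sim s0 s1 A B hA (fun _ => false) (fun _ _ _ => rfl) C (fun _ => false) k
      (fun j hj => hfirst j (lt_of_lt_of_le hj hk))
    rw [hl0] at hs
    exact hs
  have hstep : ∀ m, run s0' s1' (some C) (m + 1) = step s0' s1' (run s0' s1' (some C) m) :=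
    fun m => Function.iterate_succ_apply' _ m _
  -- step N → N+1
  have e1 : run s0' s1' (some C) (N + 1)
      = (some A, Function.update (lift (fun _ => false) ((run s0 s1 C N).2)) (some B) true) := by
    rw [hstep, phase1 N le_rfl, hNB]
    unfold step
    simp [lift_some, hσB, hs0', extendTo]
  -- step N+1 → N+2
  have hτ1A : Function.update (lift (fun _ => false) ((run s0 s1 C N).2)) (some B) true (some A)
      = (run s0 s1 C N).2 A := by
    rw [Function.update_of_ne (by simp [hAB])]
    simp [lift_some]
  have e2 : run s0' s1' (some C) (N + 1 + 1) = (some C, lift δ' (fun _ => false)) := by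
    rw [hstep, e1]
    unfold step
    refine Prod.ext ?_ ?_
    · simp only [hτ1A]
      have h0 : s0' (some A) = some C := by simp [hs0', extendTo, hAB, hA0]
      have h1 : s1' (some A) = some C := by simp [hs1', extendTo, hAB, hA1]
      rw [h0, h1, ite_self]
    · simp only [hτ1A]
      funext x
      cases x with
      | none =>
        rw [Function.update_of_ne (by simp), Function.update_of_ne (by simp)]
        rfl
      | some v =>
        rcases eq_or_ne v A with rfl | hvA
        · rw [Function.update_self, lift_some, hδ'def, delta'_A, Bool.xor_false]
        · rw [Function.update_of_ne (by simp [hvA])]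
          rcases eq_or_ne v B with rfl | hvB
          · rw [Function.update_self, lift_some, hδ'def, delta'_B _ _ _ _ _ _ (Ne.symm hAB), Bool.xor_false]
          · rw [Function.update_of_ne (by simp [hvB]), lift_some, lift_some,
              hδ' v hvA hvB, hclean' v hvA]
  -- phase 2
  have phase2 : ∀ k ≤ N, run s0' s1' (some C) (k + (N + 1 + 1))
      = (some ((run s0 s1 C k).1), lift δ' ((run s0 s1 C k).2)) := by
    intro k hk
    have hiter : run s0' s1' (some C) (k + (N + 1 + 1))
        = (step s0' s1')^[k] (run s0' s1' (some C) (N + 1 + 1)) := by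
      rw [run, Function.iterate_add_apply]
      rfl
    rw [hiter, e2]
    exact sim s0 s1 A B hA δ' hδ' C (fun _ => false) k
      (fun j hj => hfirst j (lt_of_lt_of_le hj hk))
  -- final step
  have hb3 : lift δ' ((run s0 s1 C N).2) (some B) = true := by
    rw [lift_some, hδ'def, delta'_B _ _ _ _ _ _ (Ne.symm hAB), hσB]
    rfl
  have e3 : run s0' s1' (some C) (N + 1 + 1 + (N + 1))
      = (none, Function.update (lift δ' ((run s0 s1 C N).2)) (some B) false) := by
    have hidx : N + 1 + 1 + (N + 1) = N + (N + 1 + 1) + 1 := by omega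
    rw [hidx, hstep, phase2 N le_rfl, hNB]
    unfold step
    simp [hb3, hs1', extendTo]
  -- positions before the end are not `none`
  have posSome : ∀ k < N + 1 + 1 + (N + 1), (run s0' s1' (some C) k).1 ≠ none := by
    intro k hk
    by_cases h1 : k ≤ N
    · rw [phase1 k h1]; simp
    · by_cases h2 : k = N + 1
      · rw [h2, e1]; simp
      · obtain ⟨j, rfl⟩ : ∃ j, k = j + (N + 1 + 1) := ⟨k - (N + 1 + 1), by omega⟩
        rw [phase2 j (by omega)]; simp
  -- the visit count
  have hsum1 : ∑ k ∈ Finset.range N,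
      (if (run s0' s1' (some C) k).1 = some A then 1 else 0) = T := by
    rw [← hcount, Finset.card_filter]
    refine Finset.sum_congr rfl fun k hk => ?_
    rw [Finset.mem_range] at hk
    rw [phase1 k hk.le]
    simp
  have hsum2 : ∑ k ∈ Finset.range N,
      (if (run s0' s1' (some C) (N + 1 + 1 + k)).1 = some A then 1 else 0) = T := by
    rw [← hcount, Finset.card_filter]
    refine Finset.sum_congr rfl fun k hk => ?_
    rw [Finset.mem_range] at hk
    rw [Nat.add_comm (N + 1 + 1) k, phase2 k hk.le]
    simp
  have p1 : (run s0' s1' (some C) N).1 = some B := by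
    rw [phase1 N le_rfl, hNB]
  have p2 : (run s0' s1' (some C) (N + 1)).1 = some A := by rw [e1]
  have p3 : (run s0' s1' (some C) (N + 1 + 1 + N)).1 = some B := by
    rw [Nat.add_comm (N + 1 + 1) N, phase2 N le_rfl, hNB]
  have key : ∑ k ∈ Finset.range (N + 1 + 1 + (N + 1)),
      (if (run s0' s1' (some C) k).1 = some A then 1 else 0) = 2 * T + 1 := by
    rw [Finset.sum_range_add, Finset.sum_range_succ, Finset.sum_range_succ,
      Finset.sum_range_succ, hsum1, hsum2, p1, p2, p3]
    simp [Ne.symm hAB]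
    omega
  constructor
  · refine ⟨N + 1 + 1 + (N + 1), ?_, ?_, ?_⟩
    · rw [e3]
    · exact posSome
    · rw [Finset.card_filter]
      exact key
  · intro M hM hMfirst w hw
    have hMeq : M = N + 1 + 1 + (N + 1) := by
      rcases lt_trichotomy M (N + 1 + 1 + (N + 1)) with h | h | h
      · exact absurd hM (posSome M h)
      · exact h
      · exact absurd (show (run s0' s1' (some C) (N + 1 + 1 + (N + 1))).1 = none by rw [e3])
          (hMfirst _ h)
    subst hMeq
    rw [e3]
    show Function.update (lift δ' ((run s0 s1 C N).2)) (some B) false w = false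
    rcases w with _ | v
    · rw [Function.update_of_ne (by simp)]
      rfl
    · rcases eq_or_ne v B with rfl | hvB
      · rw [Function.update_self]
      · rw [Function.update_of_ne (by simp [hvB])]
        have hvA : v ≠ A := fun h => hw (by rw [h])
        rw [lift_some, hδ' v hvA hvB, hclean' v hvA]
        rfl
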